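/- For every α ∈ (0,1] and every function u satisfying the stated conditions, there exists a positive constant C_{α,2} (depending on α and u) such that for every irrational x ∈ ℝ with B_{1,u}(x) < ∞, one has |B_{α,u}(x) − B_{1,u}(x)| < C_{α,2}. -/

import Mathlib

open Set Filter
open scoped ENNReal

noncomputable def Aa (α : ℝ) (x : ℝ) : ℝ := |1 / x - ⌊1 / x + 1 - α⌋|

noncomputable def xa0 (α x : ℝ) : ℝ := |x - ⌊x + 1 - α⌋|

noncomputable def xfull (α x : ℝ) (n : ℕ) : ℝ := (Aa α)^[n] (xa0 α x)

noncomputable def Bau (α : ℝ) (u : ℝ → ℝ) (x : ℝ) : ℝ≥0∞ :=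
  ∑' n : ℕ, ENNReal.ofReal ((∏ i ∈ Finset.range n, xfull α x i) * u (xfull α x n))

lemma Aa_one (z : ℝ) : Aa 1 z = Int.fract (1/z) := by
  unfold Aa
  rw [show (1:ℝ)/z + 1 - 1 = 1/z by ring]
  rw [abs_of_nonneg (Int.fract_nonneg _)]; rfl

lemma irrational_fract {x : ℝ} (h : Irrational x) : Irrational (Int.fract x) :=
  h.sub_intCast ⌊x⌋

lemma irrational_one_div {x : ℝ} (h : Irrational x) : Irrational (1/x) := by
  rw [one_div]; exact h.inv

lemma irrational_one_sub {x : ℝ} (h : Irrational x) : Irrational (1 - x) := by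
  simpa using h.intCast_sub 1

lemma fract_mem_Ioo {x : ℝ} (h : Irrational x) : Int.fract x ∈ Ioo (0:ℝ) 1 := by
  refine ⟨lt_of_le_of_ne (Int.fract_nonneg x) ?_, Int.fract_lt_one x⟩
  intro h0
  exact (irrational_fract h).ne_int 0 (by exact_mod_cast h0.symm)

lemma floor_shift (t : ℝ) (α : ℝ) :
    (⌊t + 1 - α⌋ : ℝ) = ⌊t⌋ + ⌊Int.fract t + 1 - α⌋ := by
  have : t + 1 - α = (Int.fract t + 1 - α) + ⌊t⌋ := by
    rw [Int.fract]; ring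
  rw [this, Int.floor_add_intCast]
  push_cast; ring

lemma Aa_eq_of_lt {α z : ℝ} (hα : α ∈ Ioc (0:ℝ) 1) (hf : Int.fract (1/z) < α) :
    Aa α z = Int.fract (1/z) := by
  unfold Aa
  rw [floor_shift (1/z) α]
  have h0 : ⌊Int.fract (1/z) + 1 - α⌋ = 0 := by
    rw [Int.floor_eq_zero_iff]
    have h1 := Int.fract_nonneg (1/z)
    constructor
    · nlinarith [hα.2]
    · nlinarith [hα.1]
  rw [h0]
  push_cast
  rw [show 1/z - (↑⌊1/z⌋ + 0) = Int.fract (1/z) by rw [Int.fract]; ring]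
  exact abs_of_nonneg (Int.fract_nonneg _)

lemma Aa_eq_of_ge {α z : ℝ} (hα : α ∈ Ioc (0:ℝ) 1) (hf : α ≤ Int.fract (1/z)) :
    Aa α z = 1 - Int.fract (1/z) := by
  unfold Aa
  rw [floor_shift (1/z) α]
  have h0 : ⌊Int.fract (1/z) + 1 - α⌋ = 1 := by
    rw [Int.floor_eq_iff]
    have h1 := Int.fract_lt_one (1/z)
    constructor
    · push_cast; nlinarith [hα.1, hα.2]
    · push_cast; nlinarith [hα.1, hα.2]
  rw [h0]
  push_cast
  rw [show 1/z - (↑⌊1/z⌋ + 1) = Int.fract (1/z) - 1 by rw [Int.fract]; ring]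
  rw [abs_of_nonpos (by linarith [Int.fract_lt_one (1/z)])]
  ring

lemma Aa_mem {α z : ℝ} (hα : α ∈ Ioc (0:ℝ) 1) (hz : z ∈ Ioo (0:ℝ) 1) (hi : Irrational z) :
    Aa α z ∈ Ioo (0:ℝ) 1 ∧ Irrational (Aa α z) := by
  have hf : Irrational (1/z) := irrational_one_div hi
  have hfm := fract_mem_Ioo hf
  have hfi := irrational_fract hf
  rcases lt_or_ge (Int.fract (1/z)) α with h | h
  · rw [Aa_eq_of_lt hα h]; exact ⟨hfm, hfi⟩
  · rw [Aa_eq_of_ge hα h]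
    exact ⟨⟨by linarith [hfm.2], by linarith [hfm.1]⟩, irrational_one_sub hfi⟩

lemma orbit_mem {α z : ℝ} (hα : α ∈ Ioc (0:ℝ) 1) (hz : z ∈ Ioo (0:ℝ) 1) (hi : Irrational z)
    (n : ℕ) : (Aa α)^[n] z ∈ Ioo (0:ℝ) 1 ∧ Irrational ((Aa α)^[n] z) := by
  induction n with
  | zero => exact ⟨hz, hi⟩
  | succ n ih =>
    rw [Function.iterate_succ_apply']
    exact Aa_mem hα ih.1 ih.2

/-- partial sums of the Brjuno series along the orbit of `z`. -/
noncomputable def Qp (a : ℝ) (u : ℝ → ℝ) (N : ℕ) (z : ℝ) : ℝ :=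
  ∑ n ∈ Finset.range N, (∏ i ∈ Finset.range n, (Aa a)^[i] z) * u ((Aa a)^[n] z)

/-- full Brjuno sum from a point `z`. -/
noncomputable def Sf (a : ℝ) (u : ℝ → ℝ) (z : ℝ) : ℝ≥0∞ :=
  ∑' n : ℕ, ENNReal.ofReal ((∏ i ∈ Finset.range n, (Aa a)^[i] z) * u ((Aa a)^[n] z))

lemma Qp_succ (a : ℝ) (u : ℝ → ℝ) (N : ℕ) (z : ℝ) :
    Qp a u (N+1) z = u z + z * Qp a u N (Aa a z) := by
  unfold Qp
  rw [Finset.sum_range_succ']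
  simp only [Finset.range_zero, Finset.prod_empty, one_mul, Function.iterate_zero_apply]
  rw [add_comm, Finset.mul_sum]
  congr 1
  apply Finset.sum_congr rfl
  intro n _
  rw [Finset.prod_range_succ']
  simp only [Function.iterate_zero_apply, Function.iterate_succ_apply]
  ring

set_option maxHeartbeats 1000000 in
lemma Sf_rec (a : ℝ) (u : ℝ → ℝ) (z : ℝ) (hz : 0 ≤ z) :
    Sf a u z = ENNReal.ofReal (u z) + ENNReal.ofReal z * Sf a u (Aa a z) := by
  unfold Sf
  rw [tsum_eq_zero_add' ENNReal.summable]
  simp only [Finset.range_zero, Finset.prod_empty, one_mul, Function.iterate_zero_apply]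
  congr 1
  have hcg : ∀ n : ℕ, ENNReal.ofReal
      ((∏ i ∈ Finset.range (n+1), (Aa a)^[i] z) * u ((Aa a)^[n+1] z)) =
      ENNReal.ofReal z * ENNReal.ofReal
      ((∏ i ∈ Finset.range n, (Aa a)^[i] (Aa a z)) * u ((Aa a)^[n] (Aa a z))) := by
    intro n
    rw [← ENNReal.ofReal_mul hz]
    congr 1
    rw [Finset.prod_range_succ']
    simp only [Function.iterate_zero_apply, Function.iterate_succ_apply]
    ring
  rw [tsum_congr hcg, ENNReal.tsum_mul_left]

lemma Qp_nonneg {α z : ℝ} (u : ℝ → ℝ) (hpos : ∀ y ∈ Set.Ioc (0:ℝ) 1, 0 < u y)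
    (hα : α ∈ Ioc (0:ℝ) 1) (hz : z ∈ Ioo (0:ℝ) 1) (hi : Irrational z) (N : ℕ) :
    0 ≤ Qp α u N z := by
  apply Finset.sum_nonneg
  intro n _
  have h1 := orbit_mem hα hz hi n
  apply mul_nonneg
  · apply Finset.prod_nonneg; intro i _; exact (orbit_mem hα hz hi i).1.1.le
  · exact (hpos _ ⟨h1.1.1, h1.1.2.le⟩).le

lemma Sf_eq_iSup {α z : ℝ} (u : ℝ → ℝ) (hpos : ∀ y ∈ Set.Ioc (0:ℝ) 1, 0 < u y)
    (hα : α ∈ Ioc (0:ℝ) 1) (hz : z ∈ Ioo (0:ℝ) 1) (hi : Irrational z) :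
    Sf α u z = ⨆ N, ENNReal.ofReal (Qp α u N z) := by
  unfold Sf
  rw [ENNReal.tsum_eq_iSup_nat]
  congr 1
  funext N
  induction N with
  | zero => simp [Qp]
  | succ N ih =>
    have h1 := orbit_mem hα hz hi N
    have h2 : 0 ≤ (∏ i ∈ Finset.range N, (Aa α)^[i] z) * u ((Aa α)^[N] z) := by
      apply mul_nonneg
      · apply Finset.prod_nonneg; intro i _; exact (orbit_mem hα hz hi i).1.1.le
      · exact (hpos _ ⟨h1.1.1, h1.1.2.le⟩).le
    rw [Finset.sum_range_succ, ih]
    unfold Qp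
    rw [Finset.sum_range_succ]
    have hA : 0 ≤ ∑ n ∈ Finset.range N, (∏ i ∈ Finset.range n, (Aa α)^[i] z) * u ((Aa α)^[n] z) :=
      Qp_nonneg u hpos hα hz hi N
    rw [ENNReal.ofReal_add hA h2]

/-- point of a state: `(false, z) ↦ z` (matched), `(true, w) ↦ 1 - w` (reflected). -/
noncomputable def ptS : Bool × ℝ → ℝ
  | (false, z) => z
  | (true, w) => 1 - w

open Classical in
/-- transition of the coupled α-vs-Gauss machine. -/
noncomputable def nextS (α : ℝ) : Bool × ℝ → Bool × ℝ
  | (false, z) => (decide (α ≤ Int.fract (1/z)), Int.fract (1/z))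
  | (true, w) =>
    if w < 1/2 then (true, w / (1 - w))
    else (decide (α ≤ Int.fract (1 / ((1 - w)/w))), Int.fract (1 / ((1 - w)/w)))

/-- Gauss-side emitted quantity. -/
noncomputable def dS (u : ℝ → ℝ) : Bool × ℝ → ℝ
  | (false, z) => u z
  | (true, w) =>
    if w < 1/2 then u w - (1 - w) * u (w / (1 - w))
    else u w + w * u ((1 - w)/w)

/-- invariant of the machine. -/
def InvS (α : ℝ) (u : ℝ → ℝ) (σ : Bool × ℝ) : Prop :=
  Irrational σ.2 ∧ σ.2 ∈ Ioo (0:ℝ) 1 ∧ (σ.1 = true → α/(1+α) ≤ σ.2) ∧ Sf 1 u σ.2 ≠ ⊤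

lemma fract_one_div_big {w : ℝ} (h1 : 1/2 < w) (h2 : w < 1) :
    Int.fract (1/w) = (1 - w)/w := by
  have hw : 0 < w := by linarith
  have ha : (1:ℝ) < 1/w := (lt_div_iff₀ hw).2 (by linarith)
  have hb : 1/w < 2 := by rw [div_lt_iff₀ hw]; linarith
  have : ⌊1/w⌋ = 1 := by
    rw [Int.floor_eq_iff]
    constructor <;> push_cast <;> linarith
  rw [Int.fract, this]
  push_cast
  field_simp

lemma fract_one_div_one_sub {w : ℝ} (h1 : 0 < w) (h2 : w < 1/2) :
    Int.fract (1/(1-w)) = w/(1-w) := by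
  have hw : (0:ℝ) < 1 - w := by linarith
  have he : 1/(1-w) = w/(1-w) + (1:ℤ) := by push_cast; field_simp; ring
  rw [he, Int.fract_add_intCast, Int.fract_eq_self.2 ⟨by positivity, by rw [div_lt_one hw]; linarith⟩]

lemma one_div_inv_rel {w : ℝ} (h1 : 0 < w) (h2 : w < 1) :
    1/(w/(1-w)) = 1/w + (-1 : ℤ) := by
  have : (0:ℝ) < 1 - w := by linarith
  have hw0 : w ≠ 0 := ne_of_gt h1
  have hw1 : (1:ℝ) - w ≠ 0 := by linarith
  push_cast
  field_simp
  ring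

lemma fract_inv_v {w : ℝ} (h1 : 0 < w) (h2 : w < 1) :
    Int.fract (1/(w/(1-w))) = Int.fract (1/w) := by
  rw [one_div_inv_rel h1 h2, Int.fract_add_intCast]

lemma irr_ne_half {w : ℝ} (hi : Irrational w) : w ≠ 1/2 := by
  intro h
  exact (h ▸ hi) ⟨(1:ℚ)/2, by push_cast; norm_num⟩

lemma Aa_refl_big {a w : ℝ} (h1 : 1/2 < w) (h2 : w < 1) :
    Aa a (1 - w) = Aa a ((1 - w)/w) := by
  have hw : 0 < w := by linarith
  have hw1 : (0:ℝ) < 1 - w := by linarith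
  have he : 1/(1 - w) = 1/((1 - w)/w) + (1:ℤ) := by
    push_cast; field_simp; ring
  unfold Aa
  rw [he]
  rw [show 1/((1-w)/w) + (1:ℤ) + 1 - a = (1/((1-w)/w) + 1 - a) + (1:ℤ) by push_cast; ring]
  rw [Int.floor_add_intCast]
  push_cast
  rw [show 1/((1-w)/w) + 1 - (↑⌊1/((1-w)/w) + 1 - a⌋ + 1) = 1/((1-w)/w) - ↑⌊1/((1-w)/w) + 1 - a⌋ by ring]

lemma pt_next {α : ℝ} (hα : α ∈ Ioc (0:ℝ) 1) (σ : Bool × ℝ) (hi : Irrational σ.2)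
    (hmem : σ.2 ∈ Ioo (0:ℝ) 1) (hlb : σ.1 = true → α/(1+α) ≤ σ.2) :
    ptS (nextS α σ) = Aa α (ptS σ) := by
  obtain ⟨b, w⟩ := σ
  simp only at hi hmem hlb
  cases b with
  | false =>
    by_cases hc : α ≤ Int.fract (1/w)
    · have : nextS α (false, w) = (true, Int.fract (1/w)) := by
        show (decide (α ≤ Int.fract (1/w)), Int.fract (1/w)) = _
        rw [decide_eq_true hc]
      rw [this]
      show 1 - Int.fract (1/w) = Aa α (ptS (false, w))
      show 1 - Int.fract (1/w) = Aa α w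
      rw [Aa_eq_of_ge hα hc]
    · have : nextS α (false, w) = (false, Int.fract (1/w)) := by
        show (decide (α ≤ Int.fract (1/w)), Int.fract (1/w)) = _
        rw [decide_eq_false hc]
      rw [this]
      show Int.fract (1/w) = Aa α w
      rw [Aa_eq_of_lt hα (lt_of_not_ge hc)]
  | true =>
    have hw0 : 0 < w := hmem.1
    have hw1 : w < 1 := hmem.2
    have hlb' := hlb rfl
    show ptS (nextS α (true, w)) = Aa α (1 - w)
    by_cases hw : w < 1/2
    · have : nextS α (true, w) = (true, w/(1-w)) := if_pos hw
      rw [this]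
      show 1 - w/(1-w) = Aa α (1 - w)
      have hv : Int.fract (1/(1-w)) = w/(1-w) := fract_one_div_one_sub hw0 hw
      have hva : α ≤ w/(1-w) := by
        rw [le_div_iff₀ (by linarith : (0:ℝ) < 1 - w)]
        have h1a : (0:ℝ) < 1 + α := by linarith [hα.1]
        rw [div_le_iff₀ h1a] at hlb'
        nlinarith
      rw [Aa_eq_of_ge hα (by rw [hv]; exact hva), hv]
    · have hwgt : 1/2 < w := lt_of_le_of_ne (le_of_not_gt hw) (Ne.symm (irr_ne_half hi))
      rw [Aa_refl_big hwgt hw1]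
      by_cases hc : α ≤ Int.fract (1/((1-w)/w))
      · have : nextS α (true, w) = (true, Int.fract (1/((1-w)/w))) := by
          have h0 : nextS α (true, w)
              = (decide (α ≤ Int.fract (1/((1-w)/w))), Int.fract (1/((1-w)/w))) := if_neg hw
          rw [h0, decide_eq_true hc]
        rw [this]
        show 1 - Int.fract (1/((1-w)/w)) = Aa α ((1-w)/w)
        rw [Aa_eq_of_ge hα hc]
      · have : nextS α (true, w) = (false, Int.fract (1/((1-w)/w))) := by
          have h0 : nextS α (true, w)
              = (decide (α ≤ Int.fract (1/((1-w)/w))), Int.fract (1/((1-w)/w))) := if_neg hw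
          rw [h0, decide_eq_false hc]
        rw [this]
        show Int.fract (1/((1-w)/w)) = Aa α ((1-w)/w)
        rw [Aa_eq_of_lt hα (lt_of_not_ge hc)]

lemma Sf_tail_ne_top {a : ℝ} (u : ℝ → ℝ) {z : ℝ} (hz : 0 < z) (h : Sf a u z ≠ ⊤) :
    Sf a u (Aa a z) ≠ ⊤ := by
  rw [Sf_rec a u z hz.le] at h
  intro h2
  apply h
  rw [h2, ENNReal.mul_top (by simpa using (ENNReal.ofReal_pos.2 hz).ne')]
  simp

lemma pt_mem {α : ℝ} (u : ℝ → ℝ) {σ : Bool × ℝ} (hInv : InvS α u σ) :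
    ptS σ ∈ Ioo (0:ℝ) 1 ∧ Irrational (ptS σ) := by
  obtain ⟨hi, hmem, _, _⟩ := hInv
  obtain ⟨b, w⟩ := σ
  cases b with
  | false => exact ⟨hmem, hi⟩
  | true =>
    simp only at hi hmem
    exact ⟨⟨by show (0:ℝ) < 1 - w; linarith [hmem.2], by show (1:ℝ) - w < 1; linarith [hmem.1]⟩,
      irrational_one_sub hi⟩

lemma InvS_next {α : ℝ} (u : ℝ → ℝ) (hα : α ∈ Ioc (0:ℝ) 1) {σ : Bool × ℝ}
    (hInv : InvS α u σ) : InvS α u (nextS α σ) := by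
  obtain ⟨hi, hmem, hlb, hfin⟩ := hInv
  obtain ⟨b, w⟩ := σ
  simp only at hi hmem hlb hfin
  have halb : α/(1+α) ≤ α := by
    rw [div_le_iff₀ (by linarith [hα.1] : (0:ℝ) < 1+α)]
    nlinarith [hα.1]
  cases b with
  | false =>
    have hf : Irrational (Int.fract (1/w)) := irrational_fract (irrational_one_div hi)
    have hfm : Int.fract (1/w) ∈ Ioo (0:ℝ) 1 := fract_mem_Ioo (irrational_one_div hi)
    have hft : Sf 1 u (Int.fract (1/w)) ≠ ⊤ := by
      rw [show Int.fract (1/w) = Aa 1 w from (Aa_one w).symm]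
      exact Sf_tail_ne_top u hmem.1 hfin
    refine ⟨hf, hfm, fun hd => ?_, hft⟩
    · have h0 : nextS α (false,w) = (decide (α ≤ Int.fract (1/w)), Int.fract (1/w)) := rfl
      rw [h0] at hd ⊢
      simp only [decide_eq_true_eq] at hd
      exact le_trans halb hd
  | true =>
    have hw0 := hmem.1
    have hw1 := hmem.2
    by_cases hw : w < 1/2
    · have hnext : nextS α (true, w) = (true, w/(1-w)) := if_pos hw
      rw [hnext]
      have hv : Int.fract (1/(1-w)) = w/(1-w) := fract_one_div_one_sub hw0 hw
      have hvirr : Irrational (w/(1-w)) := by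
        rw [← hv]
        exact irrational_fract (irrational_one_div (irrational_one_sub hi))
      have hvm : w/(1-w) ∈ Ioo (0:ℝ) 1 := by
        rw [← hv]
        exact fract_mem_Ioo (irrational_one_div (irrational_one_sub hi))
      have hvw : w ≤ w/(1-w) := by
        rw [le_div_iff₀ (by linarith : (0:ℝ) < 1 - w)]
        nlinarith
      refine ⟨hvirr, hvm, fun _ => le_trans (hlb rfl) hvw, ?_⟩
      rw [Sf_rec 1 u _ (le_of_lt hvm.1)]
      have hA1 : Aa 1 (w/(1-w)) = Aa 1 w := by
        rw [Aa_one, Aa_one, fract_inv_v hw0 hw1]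
      rw [hA1]
      exact ENNReal.add_ne_top.2 ⟨ENNReal.ofReal_ne_top,
        ENNReal.mul_ne_top ENNReal.ofReal_ne_top (Sf_tail_ne_top u hw0 hfin)⟩
    · have hwgt : 1/2 < w := lt_of_le_of_ne (le_of_not_gt hw) (Ne.symm (irr_ne_half hi))
      have hwp : Int.fract (1/w) = (1-w)/w := fract_one_div_big hwgt hw1
      have hw'irr : Irrational ((1-w)/w) := by
        rw [← hwp]; exact irrational_fract (irrational_one_div hi)
      have hw'm : (1-w)/w ∈ Ioo (0:ℝ) 1 := by
        rw [← hwp]; exact fract_mem_Ioo (irrational_one_div hi)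
      have hf' : Irrational (Int.fract (1/((1-w)/w))) :=
        irrational_fract (irrational_one_div hw'irr)
      have hf'm : Int.fract (1/((1-w)/w)) ∈ Ioo (0:ℝ) 1 :=
        fract_mem_Ioo (irrational_one_div hw'irr)
      have hft : Sf 1 u (Int.fract (1/((1-w)/w))) ≠ ⊤ := by
        rw [show Int.fract (1/((1-w)/w)) = Aa 1 ((1-w)/w) from (Aa_one _).symm]
        apply Sf_tail_ne_top u hw'm.1
        rw [show (1-w)/w = Aa 1 w by rw [Aa_one, hwp]]
        exact Sf_tail_ne_top u hw0 hfin
      by_cases hc : α ≤ Int.fract (1/((1-w)/w))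
      · have hnext : nextS α (true, w) = (true, Int.fract (1/((1-w)/w))) := by
          have h0 : nextS α (true, w)
              = (decide (α ≤ Int.fract (1/((1-w)/w))), Int.fract (1/((1-w)/w))) := if_neg hw
          rw [h0, decide_eq_true hc]
        rw [hnext]
        exact ⟨hf', hf'm, fun _ => le_trans halb hc, hft⟩
      · have hnext : nextS α (true, w) = (false, Int.fract (1/((1-w)/w))) := by
          have h0 : nextS α (true, w)
              = (decide (α ≤ Int.fract (1/((1-w)/w))), Int.fract (1/((1-w)/w))) := if_neg hw
          rw [h0, decide_eq_false hc]
        rw [hnext]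
        exact ⟨hf', hf'm, fun h => absurd h Bool.false_ne_true, hft⟩

lemma toReal_rec {a : ℝ} (u : ℝ → ℝ) (hpos : ∀ y ∈ Set.Ioc (0:ℝ) 1, 0 < u y)
    {z : ℝ} (hz : z ∈ Ioo (0:ℝ) 1) (hfin : Sf a u z ≠ ⊤) :
    (Sf a u z).toReal = u z + z * (Sf a u (Aa a z)).toReal := by
  rw [Sf_rec a u z hz.1.le]
  rw [ENNReal.toReal_add ENNReal.ofReal_ne_top
    (ENNReal.mul_ne_top ENNReal.ofReal_ne_top (Sf_tail_ne_top u hz.1 hfin))]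
  rw [ENNReal.toReal_mul, ENNReal.toReal_ofReal (hpos z ⟨hz.1, hz.2.le⟩).le,
    ENNReal.toReal_ofReal hz.1.le]

lemma t1_step {α : ℝ} (u : ℝ → ℝ) (hpos : ∀ y ∈ Set.Ioc (0:ℝ) 1, 0 < u y)
    (hα : α ∈ Ioc (0:ℝ) 1) {σ : Bool × ℝ} (hInv : InvS α u σ) :
    (Sf 1 u σ.2).toReal = dS u σ + ptS σ * (Sf 1 u (nextS α σ).2).toReal := by
  obtain ⟨hi, hmem, hlb, hfin⟩ := hInv
  obtain ⟨b, w⟩ := σ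
  simp only at hi hmem hlb hfin
  have hw0 := hmem.1
  have hw1 := hmem.2
  cases b with
  | false =>
    have h1 := toReal_rec u hpos hmem hfin
    rw [Aa_one] at h1
    show (Sf 1 u w).toReal = u w + w * (Sf 1 u (nextS α (false,w)).2).toReal
    have h2 : (nextS α (false,w)).2 = Int.fract (1/w) := rfl
    rw [h2]
    exact h1
  | true =>
    by_cases hw : w < 1/2
    · -- small case
      have hnext : nextS α (true, w) = (true, w/(1-w)) := if_pos hw
      rw [hnext]
      have hdS : dS u (true, w) = u w - (1 - w) * u (w / (1 - w)) := if_pos hw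
      have hptS : ptS (true, w) = 1 - w := rfl
      show (Sf 1 u w).toReal = dS u (true,w) + ptS (true,w) * (Sf 1 u (w/(1-w))).toReal
      rw [hdS, hptS]
      have hv : Int.fract (1/(1-w)) = w/(1-w) := fract_one_div_one_sub hw0 hw
      have hvm : w/(1-w) ∈ Ioo (0:ℝ) 1 := by
        rw [← hv]
        exact fract_mem_Ioo (irrational_one_div (irrational_one_sub hi))
      have hA1 : Aa 1 (w/(1-w)) = Aa 1 w := by
        rw [Aa_one, Aa_one, fract_inv_v hw0 hw1]
      have hfinv : Sf 1 u (w/(1-w)) ≠ ⊤ := by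
        rw [Sf_rec 1 u _ hvm.1.le, hA1]
        exact ENNReal.add_ne_top.2 ⟨ENNReal.ofReal_ne_top,
          ENNReal.mul_ne_top ENNReal.ofReal_ne_top (Sf_tail_ne_top u hw0 hfin)⟩
      have h1 := toReal_rec u hpos hmem hfin
      have h2 := toReal_rec u hpos hvm hfinv
      rw [hA1] at h2
      have hkey : (1 - w) * (w/(1-w)) = w := by
        rw [mul_comm, div_mul_cancel₀ _ (by linarith : (1:ℝ)-w ≠ 0)]
      linear_combination h1 - (1-w) * h2 - (Sf 1 u (Aa 1 w)).toReal * hkey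
    · -- big case
      have hwgt : 1/2 < w := lt_of_le_of_ne (le_of_not_gt hw) (Ne.symm (irr_ne_half hi))
      have hnext2 : (nextS α (true, w)).2 = Int.fract (1/((1-w)/w)) := by
        have h0 : nextS α (true, w)
            = (decide (α ≤ Int.fract (1/((1-w)/w))), Int.fract (1/((1-w)/w))) := if_neg hw
        rw [h0]
      rw [hnext2]
      have hdS : dS u (true, w) = u w + w * u ((1 - w)/w) := if_neg hw
      have hptS : ptS (true, w) = 1 - w := rfl
      show (Sf 1 u w).toReal
          = dS u (true,w) + ptS (true,w) * (Sf 1 u (Int.fract (1/((1-w)/w)))).toReal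
      rw [hdS, hptS]
      have hwp : Int.fract (1/w) = (1-w)/w := fract_one_div_big hwgt hw1
      have hw'm : (1-w)/w ∈ Ioo (0:ℝ) 1 := by
        rw [← hwp]; exact fract_mem_Ioo (irrational_one_div hi)
      have hA1w : Aa 1 w = (1-w)/w := by rw [Aa_one, hwp]
      have hfinw' : Sf 1 u ((1-w)/w) ≠ ⊤ := by
        rw [← hA1w]; exact Sf_tail_ne_top u hw0 hfin
      have h1 := toReal_rec u hpos hmem hfin
      rw [hA1w] at h1
      have h2 := toReal_rec u hpos hw'm hfinw'
      rw [Aa_one] at h2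
      have hkey : w * ((1-w)/w) = 1 - w := by
        rw [mul_comm, div_mul_cancel₀ _ (ne_of_gt hw0)]
      linear_combination h1 + w * h2 + (Sf 1 u (Int.fract (1/((1-w)/w)))).toReal * hkey

lemma lemI {α : ℝ} (u : ℝ → ℝ) (hpos : ∀ y ∈ Set.Ioc (0:ℝ) 1, 0 < u y)
    (hα : α ∈ Ioc (0:ℝ) 1) {C₀ θ K : ℝ} (hθ1 : θ < 1) (hK0 : 0 ≤ K)
    (hbound : ∀ σ : Bool × ℝ, InvS α u σ → σ.1 = true → |u (ptS σ) - dS u σ| ≤ C₀)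
    (hcontr : ∀ σ : Bool × ℝ, InvS α u σ → σ.1 = true → ptS σ ≤ θ)
    (hKK : C₀ + θ * K ≤ K) :
    ∀ N (σ : Bool × ℝ), InvS α u σ → Qp α u N (ptS σ) ≤ (Sf 1 u σ.2).toReal + K := by
  intro N
  induction N with
  | zero =>
    intro σ hInv
    simp only [Qp, Finset.range_zero, Finset.sum_empty]
    positivity
  | succ N IH =>
    intro σ hInv
    have hmem := (pt_mem u hInv).1
    have hnextInv := InvS_next u hα hInv
    have hIH := IH (nextS α σ) hnextInv
    have hrec : Qp α u (N+1) (ptS σ) = u (ptS σ) + ptS σ * Qp α u N (ptS (nextS α σ)) := by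
      rw [Qp_succ, pt_next hα σ hInv.1 hInv.2.1 hInv.2.2.1]
    have hstep := t1_step u hpos hα hInv
    have hmul : ptS σ * Qp α u N (ptS (nextS α σ))
        ≤ ptS σ * ((Sf 1 u (nextS α σ).2).toReal + K) :=
      mul_le_mul_of_nonneg_left hIH hmem.1.le
    rw [hrec, hstep]
    cases hb : σ.1 with
    | false =>
      have he : u (ptS σ) = dS u σ := by
        obtain ⟨b, w⟩ := σ
        simp only at hb
        subst hb
        rfl
      have hp1 : ptS σ * K ≤ K := by
        nlinarith [hmem.1, hmem.2, hK0]
      nlinarith [hmul]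
    | true =>
      have he := hbound σ hInv hb
      have hc := hcontr σ hInv hb
      have h1 : u (ptS σ) - dS u σ ≤ C₀ := (abs_le.1 he).2
      have hKK2 : ptS σ * K ≤ θ * K := mul_le_mul_of_nonneg_right hc hK0
      nlinarith [hmul]

/-- measure for the second induction. -/
noncomputable def rS (c : ℝ) (σ : Bool × ℝ) : ℕ := ⌈(1 - σ.2) / c^2⌉₊

lemma rS_lt {c : ℝ} (hc : 0 < c) {σ : Bool × ℝ} (h : 0 ≤ σ.2) :
    rS c σ < ⌈1/c^2⌉₊ + 1 := by
  have : rS c σ ≤ ⌈1/c^2⌉₊ := by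
    apply Nat.ceil_le_ceil
    apply div_le_div_of_nonneg_right ?_ (by positivity)
    · linarith
  omega

lemma rS_dec {c w : ℝ} (hc : 0 < c) (hcw : c ≤ w) (hw : w < 1/2) :
    rS c (true, w/(1-w)) < rS c (true, w) := by
  have h1w : (0:ℝ) < 1 - w := by linarith
  have hv1 : w/(1-w) ≤ 1 := by
    rw [div_le_one h1w]; linarith
  have hkey : w/(1-w) - w ≥ c^2 := by
    have : w/(1-w) - w = w^2/(1-w) := by field_simp; ring
    rw [this]
    have h2 : c^2 ≤ w^2 := by nlinarith
    have h3 : w^2 ≤ w^2/(1-w) := by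
      rw [le_div_iff₀ h1w]; nlinarith
    linarith
  unfold rS
  rw [Nat.lt_ceil]
  have hnn : (0:ℝ) ≤ (1 - w/(1-w)) / c^2 := by
    apply div_nonneg (by linarith) (by positivity)
  calc (⌈(1 - w/(1-w))/c^2⌉₊ : ℝ) < (1 - w/(1-w))/c^2 + 1 := Nat.ceil_lt_add_one hnn
    _ ≤ (1 - w)/c^2 := by
        rw [div_add' _ _ _ (by positivity : c^2 ≠ 0), div_le_div_iff_of_pos_right (by positivity)]
        linarith

lemma lemII {α : ℝ} (u : ℝ → ℝ) (hpos : ∀ y ∈ Set.Ioc (0:ℝ) 1, 0 < u y)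
    (hα : α ∈ Ioc (0:ℝ) 1) {C₀ θ K Mc : ℝ} (hθ1 : θ < 1) (hK0 : 0 ≤ K)
    (hbound : ∀ σ : Bool × ℝ, InvS α u σ → σ.1 = true → |u (ptS σ) - dS u σ| ≤ C₀)
    (hcontr : ∀ σ : Bool × ℝ, InvS α u σ → σ.1 = true → ptS σ ≤ θ)
    (hKK : C₀ + θ * K ≤ K) (hMcK : Mc ≤ K)
    (hMc : ∀ σ : Bool × ℝ, InvS α u σ → σ.1 = true → u σ.2 ≤ Mc)
    (hSfin : ∀ σ : Bool × ℝ, InvS α u σ → Sf α u (ptS σ) ≠ ⊤) :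
    ∀ n M (σ : Bool × ℝ),
      M * (⌈1/(α/(1+α))^2⌉₊ + 1) + rS (α/(1+α)) σ ≤ n → InvS α u σ →
      Qp 1 u M σ.2 ≤ (Sf α u (ptS σ)).toReal + K := by
  have hc0 : 0 < α/(1+α) := by
    apply div_pos hα.1
    linarith [hα.1]
  set c := α/(1+α) with hc
  set B := ⌈1/c^2⌉₊ + 1 with hB
  have Sa_step : ∀ σ : Bool × ℝ, InvS α u σ →
      (Sf α u (ptS σ)).toReal = u (ptS σ) + ptS σ * (Sf α u (ptS (nextS α σ))).toReal := by
    intro σ h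
    have h0 := toReal_rec (a := α) u hpos (pt_mem u h).1 (hSfin σ h)
    rwa [← pt_next hα σ h.1 h.2.1 h.2.2.1] at h0
  intro n
  induction n using Nat.strong_induction_on with
  | _ n IH =>
    intro M σ hm hInv
    have hnextInv := InvS_next u hα hInv
    have hSnn : (0:ℝ) ≤ (Sf α u (ptS σ)).toReal := ENNReal.toReal_nonneg
    obtain ⟨b, w⟩ := σ
    have hi : Irrational w := hInv.1
    have hmem : w ∈ Ioo (0:ℝ) 1 := hInv.2.1
    have hw0 := hmem.1
    have hw1 := hmem.2
    cases b with
    | false =>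
      match M with
      | 0 => simpa [Qp] using by linarith [hSnn]
      | (M'+1) =>
        have hn2 : (nextS α (false,w)).2 = Int.fract (1/w) := rfl
        have hnn : 0 ≤ (nextS α (false,w)).2 := by
          rw [hn2]; exact Int.fract_nonneg _
        have hmeas : M' * B + rS c (nextS α (false,w)) < n := by
          have h1 : rS c (nextS α (false,w)) < B := rS_lt hc0 hnn
          have h2 : (M'+1) * B + rS c (false,w) ≤ n := hm
          nlinarith [Nat.zero_le (rS c (false,w))]
        have hIH := IH _ hmeas M' (nextS α (false,w)) le_rfl hnextInv
        have hQ : Qp 1 u (M'+1) w = u w + w * Qp 1 u M' (Aa 1 w) := Qp_succ 1 u M' w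
        have hA1 : Aa 1 w = (nextS α (false,w)).2 := by rw [hn2, Aa_one]
        rw [hA1] at hQ
        have hSa := Sa_step (false, w) hInv
        have hpt : ptS (false, w) = w := rfl
        rw [hpt] at hSa
        have hmul : w * Qp 1 u M' ((nextS α (false,w)).2)
            ≤ w * ((Sf α u (ptS (nextS α (false,w)))).toReal + K) :=
          mul_le_mul_of_nonneg_left hIH hw0.le
        have hwK : w * K ≤ K := by nlinarith
        show Qp 1 u (M'+1) w ≤ (Sf α u (ptS (false,w))).toReal + K
        rw [hpt] at *
        nlinarith [ENNReal.toReal_nonneg (a := Sf α u (ptS (nextS α (false,w))))]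
    | true =>
      have hlb' : c ≤ w := hInv.2.2.1 rfl
      by_cases hw : w < 1/2
      · match M with
        | 0 => simpa [Qp] using by linarith [hSnn]
        | (M'+1) =>
          set v := w/(1-w) with hv
          have hnexteq : nextS α (true,w) = (true, v) := if_pos hw
          have h1w : (0:ℝ) < 1 - w := by linarith
          have hmeas : (M'+1) * B + rS c (true, v) < n := by
            have hd := rS_dec hc0 hlb' hw
            rw [← hv] at hd
            omega
          have hIH := IH _ hmeas (M'+1) (true,v) le_rfl (hnexteq ▸ hnextInv)
          have hA1v : Aa 1 v = Aa 1 w := by rw [Aa_one, Aa_one, fract_inv_v hw0 hw1]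
          have hQw : Qp 1 u (M'+1) w = u w + w * Qp 1 u M' (Aa 1 w) := Qp_succ 1 u M' w
          have hQv : Qp 1 u (M'+1) v = u v + v * Qp 1 u M' (Aa 1 w) := by
            rw [← hA1v]; exact Qp_succ 1 u M' v
          have hkey : (1-w) * v = w := by
            rw [hv, mul_comm, div_mul_cancel₀ _ (ne_of_gt h1w)]
          have hcomb : Qp 1 u (M'+1) w = u w - (1-w) * u v + (1-w) * Qp 1 u (M'+1) v := by
            linear_combination hQw - (1-w) * hQv - (Qp 1 u M' (Aa 1 w)) * hkey
          have hSa := Sa_step (true, w) hInv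
          rw [hnexteq] at hSa
          have hpt : ptS (true, w) = 1 - w := rfl
          have hptv : ptS (true, v) = 1 - v := rfl
          have hdS : dS u (true, w) = u w - (1 - w) * u v := if_pos hw
          have hbd := hbound (true,w) hInv rfl
          rw [hpt, hdS] at hbd
          have h5 : (u w - (1-w) * u v) - u (1-w) ≤ C₀ := by
            have := (abs_le.1 hbd).1; linarith
          have hct := hcontr (true,w) hInv rfl
          rw [hpt] at hct
          have hmul : (1-w) * Qp 1 u (M'+1) v
              ≤ (1-w) * ((Sf α u (ptS (true,v))).toReal + K) :=
            mul_le_mul_of_nonneg_left hIH h1w.le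
          have hθK : (1-w) * K ≤ θ * K := mul_le_mul_of_nonneg_right hct hK0
          show Qp 1 u (M'+1) w ≤ (Sf α u (ptS (true,w))).toReal + K
          rw [hpt] at hSa ⊢
          linarith [hmul, hcomb, hSa, h5, hθK, hKK]
      · have hwgt : 1/2 < w := lt_of_le_of_ne (le_of_not_gt hw) (Ne.symm (irr_ne_half hi))
        match M with
        | 0 => simpa [Qp] using by linarith [hSnn]
        | 1 =>
          have hQ1 : Qp 1 u 1 w = u w := by simp [Qp]
          have hMcw := hMc (true,w) hInv rfl
          rw [hQ1]
          have : u (true, w).2 = u w := rfl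
          linarith [hSnn, hMcK, hMcw]
        | (M'+2) =>
          set w' := (1-w)/w with hw'
          have hwp : Int.fract (1/w) = w' := fract_one_div_big hwgt hw1
          have hA1w : Aa 1 w = w' := by rw [Aa_one, hwp]
          have hn2 : (nextS α (true,w)).2 = Int.fract (1/w') := by
            have h0 : nextS α (true, w)
                = (decide (α ≤ Int.fract (1/((1-w)/w))), Int.fract (1/((1-w)/w))) := if_neg hw
            rw [h0]
          have hA1w' : Aa 1 w' = (nextS α (true,w)).2 := by rw [hn2, Aa_one]
          have hnn : 0 ≤ (nextS α (true,w)).2 := by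
            rw [hn2]; exact Int.fract_nonneg _
          have hmeas : M' * B + rS c (nextS α (true,w)) < n := by
            have h1 : rS c (nextS α (true,w)) < B := rS_lt hc0 hnn
            have h2 : (M'+2) * B + rS c (true,w) ≤ n := hm
            nlinarith [Nat.zero_le (rS c (true,w))]
          have hIH := IH _ hmeas M' (nextS α (true,w)) le_rfl hnextInv
          have hQ1 : Qp 1 u (M'+2) w = u w + w * Qp 1 u (M'+1) (Aa 1 w) := Qp_succ 1 u (M'+1) w
          have hQ2 : Qp 1 u (M'+1) w' = u w' + w' * Qp 1 u M' ((nextS α (true,w)).2) := by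
            rw [← hA1w']; exact Qp_succ 1 u M' w'
          rw [hA1w] at hQ1
          have hkey : w * w' = 1 - w := by
            rw [hw', mul_comm, div_mul_cancel₀ _ (ne_of_gt hw0)]
          have hcomb : Qp 1 u (M'+2) w
              = u w + w * u w' + (1-w) * Qp 1 u M' ((nextS α (true,w)).2) := by
            linear_combination hQ1 + w * hQ2 + (Qp 1 u M' ((nextS α (true,w)).2)) * hkey
          have hSa := Sa_step (true, w) hInv
          have hpt : ptS (true, w) = 1 - w := rfl
          have hdS : dS u (true, w) = u w + w * u w' := if_neg hw
          have hbd := hbound (true,w) hInv rfl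
          rw [hpt, hdS] at hbd
          have h5 : (u w + w * u w') - u (1-w) ≤ C₀ := by
            have := (abs_le.1 hbd).1; linarith
          have hct := hcontr (true,w) hInv rfl
          rw [hpt] at hct
          have hmul : (1-w) * Qp 1 u M' ((nextS α (true,w)).2)
              ≤ (1-w) * ((Sf α u (ptS (nextS α (true,w)))).toReal + K) :=
            mul_le_mul_of_nonneg_left hIH (by linarith)
          have hθK : (1-w) * K ≤ θ * K := mul_le_mul_of_nonneg_right hct hK0
          show Qp 1 u (M'+2) w ≤ (Sf α u (ptS (true,w))).toReal + K
          rw [hpt] at hSa ⊢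
          linarith [hmul, hcomb, hSa, h5, hθK, hKK]

lemma xa0_one {x : ℝ} : xa0 1 x = Int.fract x := by
  unfold xa0
  rw [show x + 1 - 1 = x by ring]
  rw [show x - (⌊x⌋:ℝ) = Int.fract x from rfl, abs_of_nonneg (Int.fract_nonneg x)]

lemma xa0_lt {α x : ℝ} (hα : α ∈ Ioc (0:ℝ) 1) (h : Int.fract x < α) :
    xa0 α x = Int.fract x := by
  unfold xa0
  rw [floor_shift x α]
  have h0 : ⌊Int.fract x + 1 - α⌋ = 0 := by
    rw [Int.floor_eq_zero_iff]
    have h1 := Int.fract_nonneg x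
    constructor
    · nlinarith [hα.1, hα.2]
    · nlinarith [hα.1, hα.2]
  rw [h0]
  push_cast
  rw [show x - (↑⌊x⌋ + 0) = Int.fract x by rw [Int.fract]; ring]
  exact abs_of_nonneg (Int.fract_nonneg _)

lemma xa0_ge {α x : ℝ} (hα : α ∈ Ioc (0:ℝ) 1) (h : α ≤ Int.fract x) :
    xa0 α x = 1 - Int.fract x := by
  unfold xa0
  rw [floor_shift x α]
  have h0 : ⌊Int.fract x + 1 - α⌋ = 1 := by
    rw [Int.floor_eq_iff]
    have h1 := Int.fract_lt_one x
    constructor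
    · push_cast; nlinarith [hα.1, hα.2]
    · push_cast; nlinarith [hα.1, hα.2]
  rw [h0]
  push_cast
  rw [show x - (↑⌊x⌋ + 1) = Int.fract x - 1 by rw [Int.fract]; ring]
  rw [abs_of_nonpos (by linarith [Int.fract_lt_one x])]
  ring

lemma Bau_eq_Sf (a : ℝ) (u : ℝ → ℝ) (x : ℝ) : Bau a u x = Sf a u (xa0 a x) := rfl

set_option maxHeartbeats 2000000 in
theorem Bau_sub_Bu_bounded (α : ℝ) (hα : α ∈ Set.Ioc (0 : ℝ) 1)
    (u : ℝ → ℝ)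
    (hpos : ∀ y ∈ Set.Ioc (0 : ℝ) 1, 0 < u y)
    (hcont : ContinuousOn u (Set.Ioc 0 1))
    (hC1 : ContDiffOn ℝ 1 u (Set.Ioo 0 1))
    (htop : Tendsto u (nhdsWithin 0 (Set.Ioi 0)) atTop)
    (hxu : ∃ L : ℝ, Tendsto (fun y => y * u y) (nhdsWithin 0 (Set.Ioi 0)) (nhds L))
    (hx2u : ∃ L : ℝ, Tendsto (fun y => y ^ 2 * deriv u y) (nhdsWithin 0 (Set.Ioi 0)) (nhds L)) :
    ∃ C : ℝ, 0 < C ∧ ∀ x : ℝ, Irrational x → Bau 1 u x < ⊤ →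
      Bau α u x < ⊤ ∧ |(Bau α u x).toReal - (Bau 1 u x).toReal| < C := by
  obtain ⟨hα0, hα1⟩ := hα
  have hαmem : α ∈ Ioc (0:ℝ) 1 := ⟨hα0, hα1⟩
  have h1mem : (1:ℝ) ∈ Ioc (0:ℝ) 1 := by norm_num
  obtain ⟨L1, hL1⟩ := hxu
  obtain ⟨L2, hL2⟩ := hx2u
  -- step 1 : bound for y * u y on (0,1]
  obtain ⟨b1, hb1mem, hb1⟩ := mem_nhdsGT_iff_exists_Ioo_subset.1
    (hL1.eventually (gt_mem_nhds (lt_add_one L1)))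
  have hb1pos : (0:ℝ) < b1 := hb1mem
  set m1 : ℝ := min (b1/2) 1 with hm1
  have hm1pos : 0 < m1 := by positivity
  obtain ⟨Mb, hMb⟩ := (isCompact_Icc (a := m1) (b := (1:ℝ))).exists_bound_of_continuousOn
    ((continuousOn_id.mul (hcont.mono (fun y hy => ⟨lt_of_lt_of_le hm1pos hy.1, hy.2⟩))))
  set M1 : ℝ := max (|L1| + 1) (max Mb 0) with hM1
  have hM1nn : 0 ≤ M1 := le_trans (le_max_right Mb 0) (le_max_right _ _)
  have hM1b : ∀ y ∈ Ioc (0:ℝ) 1, y * u y ≤ M1 := by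
    intro y hy
    rcases lt_or_ge y b1 with h | h
    · have := hb1 ⟨hy.1, h⟩
      simp only [mem_setOf_eq] at this
      have h2 : L1 + 1 ≤ |L1| + 1 := by
        have := le_abs_self L1; linarith
      calc y * u y ≤ L1 + 1 := this.le
        _ ≤ |L1| + 1 := h2
        _ ≤ M1 := le_max_left _ _
    · have hy1 : y ∈ Icc m1 1 := ⟨le_trans (le_trans (min_le_left _ _) (by linarith)) h, hy.2⟩
      have := hMb y hy1
      rw [Real.norm_eq_abs] at this
      calc y * u y ≤ |y * u y| := le_abs_self _
        _ ≤ Mb := by simpa using this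
        _ ≤ M1 := le_trans (le_max_left Mb 0) (le_max_right _ _)
  -- step 2 : derivative bound near 0
  obtain ⟨b2, hb2mem, hb2⟩ := mem_nhdsGT_iff_exists_Ioo_subset.1
    (hL2.eventually (eventually_abs_sub_lt L2 one_pos))
  have hb2pos : (0:ℝ) < b2 := hb2mem
  set δ : ℝ := min b2 (1/2) with hδ
  have hδpos : 0 < δ := by positivity
  have hδhalf : δ ≤ 1/2 := min_le_right _ _
  set K2 : ℝ := |L2| + 1 with hK2
  have hK2nn : 0 ≤ K2 := by positivity
  have hK2b : ∀ y ∈ Ioo (0:ℝ) δ, |deriv u y| ≤ K2 / y^2 := by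
    intro y hy
    have h1 := hb2 ⟨hy.1, lt_of_lt_of_le hy.2 (min_le_left _ _)⟩
    simp only [mem_setOf_eq] at h1
    have h2 : |y^2 * deriv u y| ≤ K2 := by
      have := abs_sub_abs_le_abs_sub (y^2 * deriv u y) L2
      have h3 := le_of_lt h1
      rw [hK2]
      linarith [abs_nonneg (y^2 * deriv u y)]
    rw [abs_mul, abs_of_nonneg (by positivity : (0:ℝ) ≤ y^2)] at h2
    rw [le_div_iff₀ (pow_pos hy.1 2)]
    linarith [h2]
  -- step 3 : sup bound for |u| on [m0, 1]
  set c : ℝ := α/(1+α) with hc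
  have hc0 : 0 < c := by positivity
  have hchalf : c ≤ 1/2 := by
    rw [hc, div_le_iff₀ (by linarith : (0:ℝ) < 1 + α)]
    linarith
  set m0 : ℝ := min c (δ/2) with hm0
  have hm0pos : 0 < m0 := by positivity
  have hm0half : m0 ≤ 1/2 := le_trans (min_le_left _ _) hchalf
  obtain ⟨Mc0, hMc0⟩ := (isCompact_Icc (a := m0) (b := (1:ℝ))).exists_bound_of_continuousOn
    (hcont.mono (fun y hy => ⟨lt_of_lt_of_le hm0pos hy.1, hy.2⟩))
  set Mc : ℝ := max Mc0 0 with hMc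
  have hMcnn : 0 ≤ Mc := le_max_right _ _
  have hMcb : ∀ y, m0 ≤ y → y ≤ 1 → |u y| ≤ Mc := by
    intro y h1 h2
    have := hMc0 y ⟨h1, h2⟩
    rw [Real.norm_eq_abs] at this
    exact le_trans this (le_max_left _ _)
  -- differentiability
  have hdiff : ∀ t ∈ Ioo (0:ℝ) 1, HasDerivAt u (deriv u t) t := by
    intro t ht
    exact ((hC1.differentiableOn one_ne_zero).differentiableAt
      (Ioo_mem_nhds ht.1 ht.2)).hasDerivAt
  -- MVT estimate
  have hMVT : ∀ w : ℝ, 1/2 ≤ w → w < 1 → 1 - w < δ/2 → |u ((1-w)/w) - u (1-w)| ≤ 2*K2 := by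
    intro w hwl hwu hsmall
    set y : ℝ := 1 - w with hy
    have hy0 : 0 < y := by rw [hy]; linarith
    have hyineq : y ≤ y/w := by
      rw [le_div_iff₀ (by linarith : (0:ℝ) < w)]
      nlinarith
    have hyw2 : y/w ≤ 2*y := by
      rw [div_le_iff₀ (by linarith : (0:ℝ) < w)]
      nlinarith
    have hbδ : y/w < δ := by linarith
    have hIccsub : Icc y (y/w) ⊆ Ioo (0:ℝ) 1 := by
      intro t ht
      constructor
      · linarith [ht.1]
      · have := ht.2
        have : t < δ := by linarith
        linarith
    have hf : ∀ t ∈ Icc y (y/w), HasDerivWithinAt u (deriv u t) (Icc y (y/w)) t :=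
      fun t ht => ((hdiff t (hIccsub ht)).hasDerivWithinAt)
    have hbd : ∀ t ∈ Ico y (y/w), ‖deriv u t‖ ≤ K2 / y^2 := by
      intro t ht
      have ht0 : 0 < t := lt_of_lt_of_le hy0 ht.1
      have htδ : t < δ := by linarith [ht.2]
      have h1 := hK2b t ⟨ht0, htδ⟩
      rw [Real.norm_eq_abs]
      refine le_trans h1 ?_
      apply div_le_div_of_nonneg_left hK2nn (by positivity)
      nlinarith [ht.1]
    have := norm_image_sub_le_of_norm_deriv_le_segment' hf hbd (y/w) ⟨hyineq, le_refl _⟩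
    rw [Real.norm_eq_abs] at this
    refine le_trans this ?_
    have hwpos : (0:ℝ) < w := by linarith
    have h2 : y/w - y ≤ 2*y^2 := by
      have hkeyy : y - y*w = y*y := by rw [hy]; ring
      rw [div_sub' (ne_of_gt hwpos), div_le_iff₀ hwpos]
      nlinarith [sq_nonneg y]
    calc K2/y^2 * (y/w - y) ≤ K2/y^2 * (2*y^2) := by
          apply mul_le_mul_of_nonneg_left h2 (by positivity)
      _ = 2*K2 := by field_simp
  -- the constants
  set C₀ : ℝ := 2*K2 + 3*Mc + M1 with hC₀
  have hC₀nn : 0 ≤ C₀ := by positivity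
  set θ : ℝ := 1 - c with hθ
  have hθ1 : θ < 1 := by rw [hθ]; linarith
  have hθnn : 0 ≤ θ := by rw [hθ]; linarith
  set K : ℝ := C₀/c + Mc with hK
  have hK0 : 0 ≤ K := by positivity
  have hKK : C₀ + θ * K ≤ K := by
    have h2 : c * (C₀/c) = C₀ := mul_div_cancel₀ _ (ne_of_gt hc0)
    have h3 : c * K = C₀ + c * Mc := by rw [hK, mul_add, h2]
    have h4 : θ * K = K - c * K := by rw [hθ]; ring
    have h5 : 0 ≤ c * Mc := mul_nonneg hc0.le hMcnn
    linarith
  have hMcK : Mc ≤ K := by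
    have h6 : 0 ≤ C₀/c := by positivity
    rw [hK]
    linarith
  -- the per-state bounds
  have hbound : ∀ σ : Bool × ℝ, InvS α u σ → σ.1 = true → |u (ptS σ) - dS u σ| ≤ C₀ := by
    rintro ⟨b, w⟩ hInv hb
    have hb' : b = true := hb
    subst hb'
    have hi : Irrational w := hInv.1
    have hmem : w ∈ Ioo (0:ℝ) 1 := hInv.2.1
    have hlb' : c ≤ w := hInv.2.2.1 rfl
    have hw0 := hmem.1
    have hw1 := hmem.2
    have hpt : ptS (true, w) = 1 - w := rfl
    rw [hpt]
    by_cases hw : w < 1/2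
    · have hdS : dS u (true, w) = u w - (1 - w) * u (w/(1-w)) := if_pos hw
      rw [hdS]
      have h1w : (0:ℝ) < 1 - w := by linarith
      have hv1 : w/(1-w) ≤ 1 := by rw [div_le_one h1w]; linarith
      have hvw : w ≤ w/(1-w) := by
        rw [le_div_iff₀ h1w]; nlinarith
      have hu1 : |u (1-w)| ≤ Mc := hMcb _ (by linarith) (by linarith)
      have hu2 : |u w| ≤ Mc := hMcb _ (le_trans (min_le_left _ _) hlb') hw1.le
      have hu3 : |u (w/(1-w))| ≤ Mc :=
        hMcb _ (le_trans (le_trans (min_le_left _ _) hlb') hvw) hv1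
      have hu3' : |(1-w) * u (w/(1-w))| ≤ Mc := by
        rw [abs_mul, abs_of_nonneg h1w.le]
        nlinarith [abs_nonneg (u (w/(1-w)))]
      have e1 := abs_le.1 hu1
      have e2 := abs_le.1 hu2
      have e3 := abs_le.1 hu3'
      rw [abs_le]
      constructor <;> · rw [hC₀]; nlinarith
    · have hwgt : 1/2 < w := lt_of_le_of_ne (le_of_not_gt hw) (Ne.symm (irr_ne_half hi))
      have hdS : dS u (true, w) = u w + w * u ((1-w)/w) := if_neg hw
      rw [hdS]
      have h1w : (0:ℝ) < 1 - w := by linarith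
      have hw'mem : (1-w)/w ∈ Ioc (0:ℝ) 1 := by
        constructor
        · positivity
        · rw [div_le_one (by linarith)]; linarith
      -- |(1-w) * u ((1-w)/w)| ≤ M1
      have ht2 : |(1-w) * u ((1-w)/w)| ≤ M1 := by
        have hq : (0:ℝ) ≤ (1-w)/w * u ((1-w)/w) :=
          mul_nonneg (le_of_lt (by positivity)) (hpos _ hw'mem).le
        have hqb : (1-w)/w * u ((1-w)/w) ≤ M1 := hM1b _ hw'mem
        have hid : (1-w) * u ((1-w)/w) = w * ((1-w)/w * u ((1-w)/w)) := by
          field_simp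
        rw [hid, abs_mul, abs_of_nonneg (by linarith : (0:ℝ) ≤ w),
          abs_of_nonneg hq]
        nlinarith
      have hu2 : |u w| ≤ Mc := hMcb _ (by linarith) hw1.le
      -- difference term
      have hdt : |u ((1-w)/w) - u (1-w)| ≤ 2*K2 + 2*Mc := by
        rcases lt_or_ge (1-w) (δ/2) with hcase | hcase
        · have := hMVT w hwgt.le hw1 hcase
          linarith [this, hMcnn]
        · have hm0δ : m0 ≤ δ/2 := min_le_right _ _
          have hq1 : |u (1-w)| ≤ Mc := hMcb _ (by linarith) (by linarith)
          have hq2 : |u ((1-w)/w)| ≤ Mc := by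
            apply hMcb _ _ hw'mem.2
            have : 1 - w ≤ (1-w)/w := by
              rw [le_div_iff₀ (by linarith : (0:ℝ) < w)]
              nlinarith
            linarith
          have f1 := abs_le.1 hq1
          have f2 := abs_le.1 hq2
          rw [abs_le]
          constructor <;> · nlinarith [hK2nn]
      -- assemble
      have e1 := abs_le.1 ht2
      have e2 := abs_le.1 hu2
      have e3 := abs_le.1 hdt
      have hid2 : u (1-w) - (u w + w * u ((1-w)/w))
          = (u (1-w) - u ((1-w)/w)) + (1-w) * u ((1-w)/w) - u w := by ring
      rw [hid2, abs_le]
      constructor <;> · rw [hC₀]; nlinarith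
  have hcontr : ∀ σ : Bool × ℝ, InvS α u σ → σ.1 = true → ptS σ ≤ θ := by
    rintro ⟨b, w⟩ hInv hb
    have hb' : b = true := hb
    subst hb'
    have hlb' : c ≤ w := hInv.2.2.1 rfl
    show (1:ℝ) - w ≤ θ
    rw [hθ]
    linarith
  have hMcbd : ∀ σ : Bool × ℝ, InvS α u σ → σ.1 = true → u σ.2 ≤ Mc := by
    rintro ⟨b, w⟩ hInv hb
    have hb' : b = true := hb
    subst hb'
    have hlb' : c ≤ w := hInv.2.2.1 rfl
    have := hMcb w (le_trans (min_le_left _ _) hlb') hInv.2.1.2.le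
    show u w ≤ Mc
    linarith [(abs_le.1 this).2]
  -- Lemma I consequence: finiteness of the α-side sums
  have hlemI := lemI u hpos hαmem hθ1 hK0 hbound hcontr hKK
  have hSle : ∀ σ : Bool × ℝ, InvS α u σ →
      Sf α u (ptS σ) ≤ ENNReal.ofReal ((Sf 1 u σ.2).toReal + K) := by
    intro σ hInv
    have hIoo := pt_mem u hInv
    rw [Sf_eq_iSup u hpos hαmem hIoo.1 hIoo.2]
    exact iSup_le fun N => ENNReal.ofReal_le_ofReal (hlemI N σ hInv)
  have hSfin : ∀ σ : Bool × ℝ, InvS α u σ → Sf α u (ptS σ) ≠ ⊤ :=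
    fun σ hInv => ne_top_of_le_ne_top ENNReal.ofReal_ne_top (hSle σ hInv)
  have hlemII := lemII u hpos hαmem hθ1 hK0 hbound hcontr hKK hMcK hMcbd hSfin
  -- conclusion
  refine ⟨K + 1, by linarith, ?_⟩
  intro x hx hfin
  have hBau1 : Bau 1 u x = Sf 1 u (Int.fract x) := by
    rw [Bau_eq_Sf, xa0_one]
  have hfin1 : Sf 1 u (Int.fract x) ≠ ⊤ := by
    rw [← hBau1]; exact hfin.ne
  have hfi : Irrational (Int.fract x) := irrational_fract hx
  have hfm : Int.fract x ∈ Ioo (0:ℝ) 1 := fract_mem_Ioo hx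
  obtain ⟨σ₀, hInv0, hσ2, hpt0⟩ :
      ∃ σ₀ : Bool × ℝ, InvS α u σ₀ ∧ σ₀.2 = Int.fract x ∧ ptS σ₀ = xa0 α x := by
    rcases le_or_gt α (Int.fract x) with hcase | hcase
    · refine ⟨(true, Int.fract x), ⟨hfi, hfm, fun _ => ?_, hfin1⟩, rfl, ?_⟩
      · refine le_trans ?_ hcase
        rw [div_le_iff₀ (by linarith : (0:ℝ) < 1 + α)]
        nlinarith
      · rw [xa0_ge hαmem hcase]; rfl
    · refine ⟨(false, Int.fract x), ⟨hfi, hfm, fun h => absurd h Bool.false_ne_true, hfin1⟩,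
        rfl, ?_⟩
      rw [xa0_lt hαmem hcase]; rfl
  have hBauα : Bau α u x = Sf α u (ptS σ₀) := by
    rw [Bau_eq_Sf, hpt0]
  have hfinα : Sf α u (ptS σ₀) ≠ ⊤ := hSfin σ₀ hInv0
  have ht1nn : 0 ≤ (Sf 1 u (Int.fract x)).toReal := ENNReal.toReal_nonneg
  have htαnn : 0 ≤ (Sf α u (ptS σ₀)).toReal := ENNReal.toReal_nonneg
  have hle1 : (Sf α u (ptS σ₀)).toReal ≤ (Sf 1 u (Int.fract x)).toReal + K := by
    have := hSle σ₀ hInv0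
    rw [hσ2] at this
    exact ENNReal.toReal_le_of_le_ofReal (by linarith) this
  have hle2 : (Sf 1 u (Int.fract x)).toReal ≤ (Sf α u (ptS σ₀)).toReal + K := by
    have hsup : Sf 1 u (Int.fract x)
        ≤ ENNReal.ofReal ((Sf α u (ptS σ₀)).toReal + K) := by
      rw [Sf_eq_iSup u hpos h1mem hfm hfi]
      apply iSup_le
      intro M
      apply ENNReal.ofReal_le_ofReal
      have hQ := hlemII (M * (⌈1/(α/(1+α))^2⌉₊ + 1) + rS (α/(1+α)) σ₀) M σ₀ le_rfl hInv0
      rw [hσ2] at hQ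
      exact hQ
    exact ENNReal.toReal_le_of_le_ofReal (by linarith) hsup
  constructor
  · rw [hBauα]
    exact lt_top_iff_ne_top.2 hfinα
  · rw [hBauα, hBau1]
    rw [abs_sub_lt_iff]
    constructor <;> linarith
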